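/- arXiv:1403.5908 — 2 statements merged into one kernel-verified Lean document; each statement's English description precedes it below -/
import Mathlib

section
/- For every t ≥ 0 and every z ∈ 𝔻 \ {0}, the point e^{t/2}·(z+1)²/z does not lie in the real segment [0,4]; consequently there is a unique point K_t(z) ∈ 𝔻 \ {0} satisfying (K_t(z)+1)²/K_t(z) = e^{t/2}·(z+1)²/z, and the resulting maps satisfy the composition semigroup law K_s(K_t(z)) = K_{s+t}(z) for all s, t ≥ 0 and z ∈ 𝔻 \ {0}, with K_0(z) = z. -/
/-!
Write `φ(z) = (z+1)²/z = z + 2 + z⁻¹`. Then `φ(w) = φ(z)` iff `w = z` or `wz = 1`, so `φ` is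
injective on the punctured disk and `φ(z⁻¹) = φ(z)`. On the unit circle `φ(u) = 2 + 2 Re u`
sweeps out exactly `[0,4]`, so `φ(z) ∈ [0,4]` would force `z = u` or `z = u⁻¹` for some `|u| = 1`,
impossible for `0 < |z| < 1`. Conversely, for `m ∉ [0,4]` a root `w` of `w² + (2-m)w + 1` is off
the circle, so `w` or `w⁻¹` is a preimage of `m` in the disk. Division by `e^{t/2} ≥ 1` maps
`[0,4]` into itself, which gives the first claim; the semigroup law is injectivity of `φ`
applied to `φ(K_s(K_t z)) = e^{s/2} e^{t/2} φ(z) = φ(K_{s+t} z)`.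
-/

open Set

noncomputable def phi (z : ℂ) : ℂ := (z + 1) ^ 2 / z

lemma phi_eq_add_inv {z : ℂ} (hz : z ≠ 0) : phi z = z + 2 + z⁻¹ := by
  rw [phi]; field_simp; ring

lemma phi_inv (z : ℂ) : phi z⁻¹ = phi z := by
  rcases eq_or_ne z 0 with rfl | hz
  · simp
  · rw [phi_eq_add_inv hz, phi_eq_add_inv (inv_ne_zero hz), inv_inv]; ring

lemma phi_eq_iff {w m : ℂ} (hw : w ≠ 0) : phi w = m ↔ w * w + (2 - m) * w + 1 = 0 := by
  rw [phi, div_eq_iff hw]; constructor <;> intro h <;> linear_combination h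

lemma phi_eq_phi_iff {w z : ℂ} (hw : w ≠ 0) (hz : z ≠ 0) :
    phi w = phi z ↔ w = z ∨ w * z = 1 := by
  have hdiff : phi w - phi z = (w - z) * (w * z - 1) / (w * z) := by
    rw [phi_eq_add_inv hw, phi_eq_add_inv hz]; field_simp; ring
  rw [← sub_eq_zero, hdiff, div_eq_zero_iff, or_iff_left (mul_ne_zero hw hz),
    mul_eq_zero, sub_eq_zero, sub_eq_zero]

lemma norm_eq_one_of_mul_eq_one {w z : ℂ} (hw : ‖w‖ ≤ 1) (hz : ‖z‖ ≤ 1) (h : w * z = 1) :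
    ‖z‖ = 1 := by
  have : ‖w‖ * ‖z‖ = 1 := by rw [← norm_mul, h, norm_one]
  nlinarith [norm_nonneg w, norm_nonneg z]

lemma eq_of_phi_eq_phi {w z : ℂ} (hw : ‖w‖ < 1) (hw0 : w ≠ 0) (hz : ‖z‖ < 1) (hz0 : z ≠ 0)
    (h : phi w = phi z) : w = z :=
  ((phi_eq_phi_iff hw0 hz0).1 h).resolve_right fun hwz =>
    hz.ne (norm_eq_one_of_mul_eq_one hw.le hz.le hwz)

lemma phi_of_norm_eq_one {u : ℂ} (hu : ‖u‖ = 1) : phi u = 2 + 2 * u.re := by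
  have hu0 : u ≠ 0 := norm_ne_zero_iff.1 (by rw [hu]; exact one_ne_zero)
  have hinv : u⁻¹ = starRingEnd ℂ u := by
    rw [Complex.inv_def, ← Complex.sq_norm, hu]; simp
  rw [phi_eq_add_inv hu0, hinv, add_right_comm, Complex.add_conj]; push_cast; ring

lemma exists_norm_eq_one_phi_eq {x : ℝ} (hx : x ∈ Icc (0 : ℝ) 4) :
    ∃ u : ℂ, ‖u‖ = 1 ∧ phi u = x := by
  have hc : ((x - 2) / 2) ^ 2 ≤ 1 := by nlinarith [hx.1, hx.2]
  let u : ℂ := ⟨(x - 2) / 2, √(1 - ((x - 2) / 2) ^ 2)⟩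
  have hu : ‖u‖ = 1 := by
    rw [Complex.norm_def, Complex.normSq_mk, ← sq, ← sq, Real.sq_sqrt (by linarith)]
    norm_num
  refine ⟨u, hu, ?_⟩
  rw [phi_of_norm_eq_one hu]; simp only [u]; push_cast; ring

lemma phi_notMem_ofReal_Icc {z : ℂ} (hz : ‖z‖ < 1) (hz0 : z ≠ 0) :
    phi z ∉ ((↑) : ℝ → ℂ) '' Icc 0 4 := by
  rintro ⟨x, hx, hxz⟩
  obtain ⟨u, hu, hux⟩ := exists_norm_eq_one_phi_eq hx
  have hu0 : u ≠ 0 := norm_ne_zero_iff.1 (by rw [hu]; exact one_ne_zero)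
  rcases (phi_eq_phi_iff hz0 hu0).1 (hux.trans hxz).symm with rfl | hzu
  · exact hz.ne hu
  · exact hz.ne (norm_eq_one_of_mul_eq_one hu.le hz.le (mul_comm z u ▸ hzu))

lemma ofReal_mul_phi_notMem_ofReal_Icc {r : ℝ} (hr : 1 ≤ r) {z : ℂ} (hz : ‖z‖ < 1)
    (hz0 : z ≠ 0) : (r : ℂ) * phi z ∉ ((↑) : ℝ → ℂ) '' Icc 0 4 := by
  rintro ⟨x, hx, hxz⟩
  have hr0 : (0 : ℝ) < r := by linarith
  refine phi_notMem_ofReal_Icc hz hz0 ⟨x / r, ⟨by have := hx.1; positivity, ?_⟩, ?_⟩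
  · rw [div_le_iff₀ hr0]; nlinarith [hx.1, hx.2]
  · rw [Complex.ofReal_div, hxz, mul_div_cancel_left₀ _ (Complex.ofReal_ne_zero.2 hr0.ne')]

lemma exists_phi_eq {m : ℂ} (hm : m ∉ ((↑) : ℝ → ℂ) '' Icc 0 4) :
    ∃ w : ℂ, ‖w‖ < 1 ∧ w ≠ 0 ∧ phi w = m := by
  obtain ⟨s, hs⟩ := IsAlgClosed.exists_eq_mul_self (discrim 1 (2 - m) 1)
  obtain ⟨w, hw⟩ := exists_quadratic_eq_zero one_ne_zero ⟨s, hs⟩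
  have hw0 : w ≠ 0 := by rintro rfl; simp at hw
  have hphi : phi w = m := (phi_eq_iff hw0).2 (by linear_combination hw)
  have hw1 : ‖w‖ ≠ 1 := by
    intro hw1
    have hre := abs_le.1 ((Complex.abs_re_le_norm w).trans hw1.le)
    refine hm ⟨2 + 2 * w.re, ⟨by linarith, by linarith⟩, ?_⟩
    rw [← hphi, phi_of_norm_eq_one hw1]; push_cast; ring
  rcases hw1.lt_or_gt with hlt | hgt
  · exact ⟨w, hlt, hw0, hphi⟩
  · refine ⟨w⁻¹, ?_, inv_ne_zero hw0, by rw [phi_inv, hphi]⟩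
    rw [norm_inv]; exact inv_lt_one_of_one_lt₀ hgt

/-- For every `t ≥ 0` and `z ∈ 𝔻 \ {0}`, the point `e^{t/2}(z+1)²/z` does not lie in
the real segment `[0,4]`; consequently there is a unique `K_t(z) ∈ 𝔻 \ {0}` with
`(K_t(z)+1)²/K_t(z) = e^{t/2}(z+1)²/z`, and the resulting maps form a composition
semigroup: `K_s(K_t(z)) = K_{s+t}(z)`, with `K_0(z) = z`. -/
theorem stmt_1 :
    (∀ t : ℝ, 0 ≤ t → ∀ z : ℂ, ‖z‖ < 1 → z ≠ 0 →
      (¬ ∃ x : ℝ, 0 ≤ x ∧ x ≤ 4 ∧ (x : ℂ) = Complex.exp (t / 2) * (z + 1) ^ 2 / z) ∧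
      (∃! w : ℂ, (‖w‖ < 1 ∧ w ≠ 0) ∧
        (w + 1) ^ 2 / w = Complex.exp (t / 2) * (z + 1) ^ 2 / z)) ∧
    (∀ K : ℝ → ℂ → ℂ,
      (∀ t : ℝ, 0 ≤ t → ∀ z : ℂ, ‖z‖ < 1 → z ≠ 0 →
        (‖K t z‖ < 1 ∧ K t z ≠ 0) ∧
        (K t z + 1) ^ 2 / K t z = Complex.exp (t / 2) * (z + 1) ^ 2 / z) →
      ((∀ s t : ℝ, 0 ≤ s → 0 ≤ t → ∀ z : ℂ, ‖z‖ < 1 → z ≠ 0 →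
          K s (K t z) = K (s + t) z) ∧
        (∀ z : ℂ, ‖z‖ < 1 → z ≠ 0 → K 0 z = z))) := by
  have hscale (t : ℝ) (z : ℂ) :
      Complex.exp (t / 2) * (z + 1) ^ 2 / z = Complex.exp (t / 2) * phi z :=
    mul_div_assoc _ _ _
  refine ⟨fun t ht z hz hz0 => ?_, fun K hK => ?_⟩
  · have hm := ofReal_mul_phi_notMem_ofReal_Icc
      (Real.one_le_exp (by positivity : 0 ≤ t / 2)) hz hz0
    rw [Complex.ofReal_exp, Complex.ofReal_div, Complex.ofReal_ofNat, ← hscale] at hm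
    refine ⟨fun ⟨x, hx0, hx4, hx⟩ => hm ⟨x, ⟨hx0, hx4⟩, hx⟩, ?_⟩
    obtain ⟨w, hw, hw0, hwm⟩ := exists_phi_eq hm
    exact ⟨w, ⟨⟨hw, hw0⟩, hwm⟩, fun v ⟨⟨hv, hv0⟩, hvm⟩ =>
      eq_of_phi_eq_phi hv hv0 hw hw0 (hvm.trans hwm.symm)⟩
  · have hKphi (t : ℝ) (ht : 0 ≤ t) (z : ℂ) (hz : ‖z‖ < 1) (hz0 : z ≠ 0) :
        phi (K t z) = Complex.exp (t / 2) * phi z :=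
      (hK t ht z hz hz0).2.trans (hscale t z)
    refine ⟨fun s t hs ht z hz hz0 => ?_, fun z hz hz0 => ?_⟩
    · obtain ⟨⟨hKt, hKt0⟩, -⟩ := hK t ht z hz hz0
      obtain ⟨⟨hKs, hKs0⟩, -⟩ := hK s hs (K t z) hKt hKt0
      obtain ⟨⟨hKst, hKst0⟩, -⟩ := hK (s + t) (add_nonneg hs ht) z hz hz0
      refine eq_of_phi_eq_phi hKs hKs0 hKst hKst0 ?_
      rw [hKphi s hs _ hKt hKt0, hKphi t ht z hz hz0,
        hKphi (s + t) (add_nonneg hs ht) z hz hz0, ← mul_assoc, ← Complex.exp_add]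
      push_cast; ring_nf
    · obtain ⟨⟨hK0, hK00⟩, -⟩ := hK 0 le_rfl z hz hz0
      exact eq_of_phi_eq_phi hK0 hK00 hz hz0 (by rw [hKphi 0 le_rfl z hz hz0]; simp)
end

section
/- Let t > 0 and let θ_t(z) = z·exp(t(z+1)/(2(z−1))). The function ψ(z) = θ_t(z)/(1 − θ_t(z)) is holomorphic on the open unit disk (since |θ_t(z)| < 1 there), and its Taylor series at 0 is ψ(z) = ∑_{n≥1} m_n(t) zⁿ, where for n ≥ 1, m_n(t) = ∑_{k=1}^{n} L^{(1)}_{n−k}(kt)·e^{−kt/2} − 2·∑_{k=1}^{n−1} L^{(1)}_{n−k−1}(kt)·e^{−kt/2} + ∑_{k=1}^{n−2} L^{(1)}_{n−k−2}(kt)·e^{−kt/2}, the sums being empty when their upper limit is smaller than 1. In particular, m_n(t) is the n-th moment of the distribution ν_t of the boolean unitary Brownian motion at time t. -/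
/-- The `n`-th Laguerre polynomial of index `1`:
`L⁽¹⁾_n(x) = ∑_{i=0}^n (-1)^i (n+1 choose n-i) xⁱ/i!`. -/
noncomputable def laguerreL1 (n : ℕ) (x : ℝ) : ℝ :=
  ∑ i ∈ Finset.range (n + 1),
    (-1 : ℝ) ^ i * ((n + 1).choose (n - i) : ℝ) * x ^ i / (Nat.factorial i : ℝ)

/-- The `n`-th moment of the distribution of the boolean unitary Brownian motion:
`m_n(t) = ∑_{k=1}^n L⁽¹⁾_{n-k}(kt) e^{-kt/2} - 2 ∑_{k=1}^{n-1} L⁽¹⁾_{n-k-1}(kt) e^{-kt/2}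
  + ∑_{k=1}^{n-2} L⁽¹⁾_{n-k-2}(kt) e^{-kt/2}`. -/
noncomputable def booleanMoment (t : ℝ) (n : ℕ) : ℝ :=
  (∑ k ∈ Finset.Icc 1 n, laguerreL1 (n - k) (k * t) * Real.exp (-(k * t) / 2))
    - 2 * (∑ k ∈ Finset.Icc 1 (n - 1),
        laguerreL1 (n - k - 1) (k * t) * Real.exp (-(k * t) / 2))
    + (∑ k ∈ Finset.Icc 1 (n - 2),
        laguerreL1 (n - k - 2) (k * t) * Real.exp (-(k * t) / 2))

open Finset Filter Topology
open scoped Nat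

/-!
Writing `θ = θ_t`, one has `θ^k = e^{-kt/2} z^k exp(-kt·z/(1-z))`. Together with the generating
function `∑ₙ L⁽¹⁾ₙ(x) zⁿ = (1-z)⁻² exp(-xz/(1-z))` this shows that `ψ/(1-z)² = ∑_{k≥1} θ^k` has
`n`-th coefficient `∑_{k=1}^n L⁽¹⁾_{n-k}(kt) e^{-kt/2}`; multiplying by `(1-z)²` gives `m_n(t)`.
The double series converges absolutely only near `0`, but since `ψ` is holomorphic on the unit
disc, its Taylor series at `0` converges to it on the whole disc.
-/

lemma summable_of_hasSum_fiberwise_nonneg {α β : Type*} {f : α × β → ℝ} (hf : 0 ≤ f) {s : α → ℝ}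
    (hfib : ∀ k, HasSum (fun n => f (k, n)) (s k)) (hs : Summable s) : Summable f :=
  (summable_prod_of_nonneg hf).2
    ⟨fun k => (hfib k).summable, by simpa only [fun k => (hfib k).tsum_eq] using hs⟩

lemma hasSum_sum_antidiagonal_of_summable_norm {A E : Type*} [AddMonoid A] [HasAntidiagonal A]
    [NormedAddCommGroup E] [CompleteSpace E] {g : A × A → E} (hg : Summable fun p => ‖g p‖) {s : A → E} {S : E}
    (hfib : ∀ k, HasSum (fun n => g (k, n)) (s k)) (hs : HasSum s S) :
    HasSum (fun N => ∑ p ∈ antidiagonal N, g p) S := by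
  have hgS : HasSum g S := by
    have h := hg.of_norm.hasSum
    rwa [(h.prod_fiberwise hfib).unique hs] at h
  refine (HasAntidiagonal.sigmaAntidiagonalEquivProd.hasSum_iff.2 hgS).sigma fun N => ?_
  have h := hasSum_fintype fun p : antidiagonal N => g p
  rwa [sum_coe_sort] at h

lemma one_sub_ne_zero_of_norm_lt_one {R : Type*} [NormedRing R] [NormOneClass R] {z : R}
    (hz : ‖z‖ < 1) : 1 - z ≠ 0 := by
  rintro h
  simp [← sub_eq_zero.1 h] at hz

section Laguerre

variable {K : Type*} [RCLike K]

lemma hasSum_choose_mul_pow_div_one_sub_pow (m : ℕ) {z : K} (hz : ‖z‖ < 1) :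
    HasSum (fun j => ((m + j + 1).choose j : K) * z ^ (m + j)) (z ^ m / (1 - z) ^ (m + 2)) := by
  rw [← mul_one_div]
  refine ((hasSum_choose_mul_geometric_of_norm_lt_one (m + 1) hz).mul_left (z ^ m)).congr_fun
    fun j => ?_
  rw [show m + j + 1 = j + (m + 1) by ring, Nat.choose_symm_add, pow_add]
  ring

lemma laguerreL1_eq_sum_antidiagonal (n : ℕ) (x : ℝ) :
    laguerreL1 n x =
      ∑ p ∈ antidiagonal n, (-x) ^ p.1 / p.1 ! * ((p.1 + p.2 + 1).choose p.2 : ℝ) := by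
  rw [laguerreL1, Nat.sum_antidiagonal_eq_sum_range_succ_mk]
  refine sum_congr rfl fun i hi => ?_
  rw [Nat.add_sub_cancel' (Nat.lt_succ_iff.1 (mem_range.1 hi)), neg_pow]
  ring

lemma abs_laguerreL1_le (n : ℕ) (x : ℝ) : |laguerreL1 n x| ≤ laguerreL1 n (-|x|) := by
  simp only [laguerreL1_eq_sum_antidiagonal, neg_neg]
  refine (abs_sum_le_sum_abs _ _).trans_eq (sum_congr rfl fun p _ => ?_)
  simp [abs_mul, abs_div, abs_pow]

theorem hasSum_laguerreL1 (x : ℝ) {z : K} (hz : ‖z‖ < 1) :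
    HasSum (fun n => (laguerreL1 n x : K) * z ^ n)
      (NormedSpace.exp (-(x : K) * (z / (1 - z))) / (1 - z) ^ 2) := by
  set H : ℕ × ℕ → K := fun p =>
    ((-x) ^ p.1 / p.1 ! : ℝ) * (((p.1 + p.2 + 1).choose p.2 : K) * z ^ (p.1 + p.2))
  have hfib (m : ℕ) :
      HasSum (fun j => H (m, j)) (((-x) ^ m / m ! : ℝ) * (z ^ m / (1 - z) ^ (m + 2))) :=
    (hasSum_choose_mul_pow_div_one_sub_pow m hz).mul_left _
  have hr : ‖‖z‖‖ < 1 := by rwa [norm_norm]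
  have hnorm : Summable fun p => ‖H p‖ := by
    refine summable_of_hasSum_fiberwise_nonneg (fun p => norm_nonneg _) (fun m =>
      ((hasSum_choose_mul_pow_div_one_sub_pow m hr).mul_left (|x| ^ m / m !)).congr_fun
        fun j => by simp [H, norm_mul])
      (((Real.summable_pow_div_factorial (|x| * (‖z‖ / (1 - ‖z‖)))).mul_right
        ((1 - ‖z‖) ^ 2)⁻¹).congr fun m => ?_)
    have hr1 := one_sub_ne_zero_of_norm_lt_one hr
    rw [mul_pow, div_pow]
    field_simp
    ring
  have hexp : HasSum (fun m => ((-x) ^ m / m ! : ℝ) * (z ^ m / (1 - z) ^ (m + 2)))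
      (NormedSpace.exp (-(x : K) * (z / (1 - z))) / (1 - z) ^ 2) := by
    have hz1 := one_sub_ne_zero_of_norm_lt_one hz
    refine ((NormedSpace.expSeries_div_hasSum_exp (-(x : K) * (z / (1 - z)))).div_const
      ((1 - z) ^ 2)).congr_fun fun m => ?_
    rw [mul_pow, div_pow]
    push_cast
    field_simp
    ring
  refine (hasSum_sum_antidiagonal_of_summable_norm hnorm hfib hexp).congr_fun fun n => ?_
  simp only [laguerreL1_eq_sum_antidiagonal, H]
  push_cast
  rw [sum_mul]
  refine sum_congr rfl fun p hp => ?_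
  rw [mem_antidiagonal.1 hp]
  ring

end Laguerre

noncomputable def theta (t : ℝ) (z : ℂ) : ℂ :=
  z * Complex.exp (t * (z + 1) / (2 * (z - 1)))

section Theta

variable {t : ℝ} {z : ℂ}

lemma re_add_one_div_sub_one_nonpos (hz : ‖z‖ ≤ 1) : ((z + 1) / (z - 1)).re ≤ 0 := by
  have hnum : (z.re + 1) * (z.re - 1) + z.im * z.im ≤ 0 := by
    have h := Complex.normSq_eq_norm_sq z
    rw [Complex.normSq_apply] at h
    nlinarith [norm_nonneg z]
  rw [Complex.div_re, ← add_div]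
  exact div_nonpos_of_nonpos_of_nonneg (by simpa using hnum) (Complex.normSq_nonneg _)

lemma norm_theta_le (ht : 0 ≤ t) (hz : ‖z‖ ≤ 1) : ‖theta t z‖ ≤ ‖z‖ := by
  have hre : ((t : ℂ) * (z + 1) / (2 * (z - 1))).re ≤ 0 := by
    rw [show (t : ℂ) * (z + 1) / (2 * (z - 1)) = ((t / 2 : ℝ) : ℂ) * ((z + 1) / (z - 1)) by
      rw [mul_comm 2, ← div_div]; push_cast; ring, Complex.re_ofReal_mul]
    exact mul_nonpos_of_nonneg_of_nonpos (by positivity) (re_add_one_div_sub_one_nonpos hz)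
  rw [theta, norm_mul, Complex.norm_exp]
  exact mul_le_of_le_one_right (norm_nonneg z) (Real.exp_le_one_iff.2 hre)

lemma theta_pow (t : ℝ) (hz : z ≠ 1) (k : ℕ) :
    theta t z ^ k =
      (Real.exp (-(k * t) / 2) : ℂ) * z ^ k * Complex.exp (-((k * t : ℝ) : ℂ) * (z / (1 - z))) := by
  have hz1 : z - 1 ≠ 0 := sub_ne_zero.2 hz
  have hz2 : 1 - z ≠ 0 := sub_ne_zero.2 hz.symm
  have harg : (k : ℂ) * (t * (z + 1) / (2 * (z - 1))) =
      ((-(k * t) / 2 : ℝ) : ℂ) + -((k * t : ℝ) : ℂ) * (z / (1 - z)) := by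
    push_cast
    field_simp
    ring
  rw [theta, mul_pow, ← Complex.exp_nat_mul, harg, Complex.exp_add, Complex.ofReal_exp]
  ring

lemma differentiableOn_theta_div_one_sub (ht : 0 ≤ t) :
    DifferentiableOn ℂ (fun z => theta t z / (1 - theta t z)) (Metric.ball 0 1) := by
  have hθ : DifferentiableOn ℂ (theta t) (Metric.ball 0 1) := by
    intro z hz
    have hz1 : 2 * (z - 1) ≠ 0 :=
      mul_ne_zero two_ne_zero (neg_ne_zero.1 (by
        simpa using one_sub_ne_zero_of_norm_lt_one (mem_ball_zero_iff.1 hz)))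
    unfold theta
    fun_prop (disch := exact hz1)
  refine hθ.div (hθ.const_sub 1) fun z hz => one_sub_ne_zero_of_norm_lt_one ?_
  have hz := mem_ball_zero_iff.1 hz
  exact (norm_theta_le ht hz.le).trans_lt hz

end Theta

noncomputable def laguerreMomentSum (t : ℝ) (n : ℕ) : ℝ :=
  ∑ k ∈ Icc 1 n, laguerreL1 (n - k) (k * t) * Real.exp (-(k * t) / 2)

lemma booleanMoment_eq (t : ℝ) (n : ℕ) :
    booleanMoment t n =
      laguerreMomentSum t n - 2 * laguerreMomentSum t (n - 1) + laguerreMomentSum t (n - 2) := by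
  simp only [booleanMoment, laguerreMomentSum, Nat.sub_right_comm n _ (1 : ℕ),
    Nat.sub_right_comm n _ (2 : ℕ)]

lemma laguerreMomentSum_zero (t : ℝ) : laguerreMomentSum t 0 = 0 := by
  simp [laguerreMomentSum]

lemma laguerreMomentSum_succ (t : ℝ) (N : ℕ) :
    laguerreMomentSum t (N + 1) = ∑ p ∈ antidiagonal N,
      laguerreL1 p.2 ((p.1 + 1 : ℕ) * t) * Real.exp (-((p.1 + 1 : ℕ) * t) / 2) := by
  rw [laguerreMomentSum, ← Ico_add_one_right_eq_Icc, sum_Ico_eq_sum_range,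
    Nat.sum_antidiagonal_eq_sum_range_succ_mk]
  refine sum_congr (by simp) fun k _ => ?_
  rw [add_comm 1 k, Nat.add_sub_add_right]

lemma hasSum_theta_pow_div (t : ℝ) {z : ℂ} (hz : ‖z‖ < 1) (k : ℕ) :
    HasSum (fun j => ((laguerreL1 j (k * t) * Real.exp (-(k * t) / 2) : ℝ) : ℂ) * z ^ (k + j))
      (theta t z ^ k / (1 - z) ^ 2) := by
  have hz1 : z ≠ 1 := fun h => by simp [h] at hz
  rw [theta_pow t hz1, Complex.exp_eq_exp_ℂ, mul_div_assoc]
  refine ((hasSum_laguerreL1 (k * t) hz).mul_left _).congr_fun fun j => ?_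
  rw [← RCLike.ofReal_eq_complex_ofReal]
  push_cast
  ring

lemma hasSum_laguerreL1_majorant (t : ℝ) {r : ℝ} (hr0 : 0 ≤ r) (hr : r < 1) (k : ℕ) :
    HasSum (fun j => laguerreL1 j (-(k * t)) * Real.exp (-(k * t) / 2) * r ^ (k + j))
      ((r * Real.exp (t * (r / (1 - r)) - t / 2)) ^ k / (1 - r) ^ 2) := by
  have hexp : (r * Real.exp (t * (r / (1 - r)) - t / 2)) ^ k =
      Real.exp (-(k * t) / 2) * r ^ k * Real.exp (-(-(k * t)) * (r / (1 - r))) := by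
    rw [mul_pow, ← Real.exp_nat_mul, mul_right_comm, ← Real.exp_add]
    ring_nf
  rw [hexp, Real.exp_eq_exp_ℝ, mul_div_assoc]
  refine ((hasSum_laguerreL1 (K := ℝ) (-(k * t)) (by rwa [Real.norm_of_nonneg hr0])).mul_left
    _).congr_fun fun j => ?_
  simp only [RCLike.ofReal_real_eq_id, id, pow_add]
  ring

-- `hρ` makes the double series over `(k, j)`, with its terms replaced by their norms, dominated by
-- a convergent geometric series in `k`.
theorem hasSum_laguerreMomentSum {t : ℝ} (ht : 0 ≤ t) {z : ℂ} (hz : ‖z‖ < 1)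
    (hρ : ‖z‖ * Real.exp (t * (‖z‖ / (1 - ‖z‖)) - t / 2) < 1) :
    HasSum (fun n => (laguerreMomentSum t n : ℂ) * z ^ n)
      (theta t z / (1 - theta t z) / (1 - z) ^ 2) := by
  set g : ℕ × ℕ → ℂ := fun p =>
    ((laguerreL1 p.2 ((p.1 + 1 : ℕ) * t) * Real.exp (-((p.1 + 1 : ℕ) * t) / 2) : ℝ) : ℂ) *
      z ^ (p.1 + 1 + p.2)
  set b : ℕ × ℕ → ℝ := fun p =>
    laguerreL1 p.2 (-((p.1 + 1 : ℕ) * t)) * Real.exp (-((p.1 + 1 : ℕ) * t) / 2) *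
      ‖z‖ ^ (p.1 + 1 + p.2)
  have hgb (p : ℕ × ℕ) : ‖g p‖ ≤ b p := by
    have h := abs_laguerreL1_le p.2 ((p.1 + 1 : ℕ) * t)
    rw [abs_of_nonneg (mul_nonneg (Nat.cast_nonneg _) ht)] at h
    simp only [g, b, norm_mul, norm_pow, Complex.norm_real, Real.norm_eq_abs, Real.abs_exp]
    gcongr
  have hb : Summable b :=
    summable_of_hasSum_fiberwise_nonneg (fun p => (norm_nonneg _).trans (hgb p))
      (fun k => hasSum_laguerreL1_majorant t (norm_nonneg z) hz (k + 1))
      (((summable_geometric_of_lt_one (by positivity) hρ).comp_injective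
        (add_left_injective 1)).div_const _)
  have hθ : ‖theta t z‖ < 1 := (norm_theta_le ht hz.le).trans_lt hz
  have hgeom : HasSum (fun k => theta t z ^ (k + 1) / (1 - z) ^ 2)
      (theta t z / (1 - theta t z) / (1 - z) ^ 2) := by
    exact (((hasSum_geometric_of_norm_lt_one hθ).mul_left (theta t z)).div_const _).congr_fun
      fun k => by rw [pow_succ']
  have h := hasSum_sum_antidiagonal_of_summable_norm
    (hb.of_nonneg_of_le (fun p => norm_nonneg _) hgb) (fun k => hasSum_theta_pow_div t hz (k + 1))
    hgeom
  rw [← hasSum_nat_add_iff' 1]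
  simp only [laguerreMomentSum_zero, sum_range_one, Complex.ofReal_zero, zero_mul, sub_zero]
  refine h.congr_fun fun N => ?_
  rw [laguerreMomentSum_succ, Complex.ofReal_sum, sum_mul]
  refine sum_congr rfl fun p hp => ?_
  rw [← mem_antidiagonal.1 hp, add_right_comm]

section Shift

variable {R : Type*} [CommRing R] [TopologicalSpace R] [IsTopologicalRing R]
  {a : ℕ → R} {z A : R}

lemma HasSum.pow_mul_shift (h : HasSum (fun n => a n * z ^ n) A) (h0 : a 0 = 0) (k : ℕ) :
    HasSum (fun n => a (n - k) * z ^ n) (z ^ k * A) := by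
  rw [← hasSum_nat_add_iff' k]
  have hhead : ∑ i ∈ range k, a (i - k) * z ^ i = 0 := sum_eq_zero fun i hi => by
    rw [Nat.sub_eq_zero_of_le (mem_range.1 hi).le, h0, zero_mul]
  rw [hhead, sub_zero]
  exact (h.mul_left (z ^ k)).congr_fun fun n => by rw [Nat.add_sub_cancel, pow_add]; ring

lemma HasSum.one_sub_sq_mul (h : HasSum (fun n => a n * z ^ n) A) (h0 : a 0 = 0) :
    HasSum (fun n => (a n - 2 * a (n - 1) + a (n - 2)) * z ^ n) ((1 - z) ^ 2 * A) := by
  rw [show (1 - z) ^ 2 * A = A - 2 * (z ^ 1 * A) + z ^ 2 * A by ring]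
  exact ((h.sub ((h.pow_mul_shift h0 1).mul_left 2)).add (h.pow_mul_shift h0 2)).congr_fun
    fun n => by ring

end Shift

theorem eventually_hasSum_booleanMoment {t : ℝ} (ht : 0 ≤ t) :
    ∀ᶠ z in 𝓝 (0 : ℂ),
      HasSum (fun n => (booleanMoment t n : ℂ) * z ^ n) (theta t z / (1 - theta t z)) := by
  have hlim : Tendsto (fun z : ℂ => ‖z‖ * Real.exp (t * (‖z‖ / (1 - ‖z‖)) - t / 2))
      (𝓝 0) (𝓝 0) := by
    have h : ContinuousAt (fun z : ℂ => ‖z‖ * Real.exp (t * (‖z‖ / (1 - ‖z‖)) - t / 2)) 0 := by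
      fun_prop (disch := simp)
    simpa using h.tendsto
  filter_upwards [hlim.eventually_lt_const one_pos, Metric.ball_mem_nhds 0 one_pos]
    with z hρ hz
  have hz := mem_ball_zero_iff.1 hz
  have h := (hasSum_laguerreMomentSum ht hz hρ).one_sub_sq_mul (by simp [laguerreMomentSum_zero])
  rw [mul_div_cancel₀ _ (pow_ne_zero 2 (one_sub_ne_zero_of_norm_lt_one hz))] at h
  exact h.congr_fun fun n => by rw [booleanMoment_eq]; push_cast; ring

open FormalMultilinearSeries in
theorem hasSum_of_eventually_hasSum_of_differentiableOn {f : ℂ → ℂ} {a : ℕ → ℂ} {r : ℝ}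
    (hf : DifferentiableOn ℂ f (Metric.ball 0 r))
    (hloc : ∀ᶠ z in 𝓝 0, HasSum (fun n => a n * z ^ n) (f z)) {z : ℂ}
    (hz : z ∈ Metric.ball 0 r) : HasSum (fun n => a n * z ^ n) (f z) := by
  have hp : HasFPowerSeriesAt f (ofScalars ℂ a) 0 :=
    hasFPowerSeriesAt_iff.2 (by simpa [coeff_ofScalars, mul_comm] using hloc)
  have ha : a = fun n => iteratedDeriv n f 0 / n ! := ofScalars_series_injective ℂ ℂ
    (hp.eq_formalMultilinearSeries
      (hf.analyticAt (Metric.ball_mem_nhds 0 (Metric.pos_of_mem_ball hz))).hasFPowerSeriesAt)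
  rw [ha]
  refine (Complex.hasSum_taylorSeries_on_ball hf hz).congr_fun fun n => ?_
  simp only [sub_zero, smul_eq_mul]
  ring

/-- For `t > 0` and `θ_t(z) = z exp(t(z+1)/(2(z-1)))`, the function
`ψ(z) = θ_t(z)/(1-θ_t(z))` is holomorphic on the open unit disk, and its Taylor series
at `0` is `∑_{n≥1} m_n(t) zⁿ`, with `m_n(t)` given by the Laguerre-polynomial formula;
these are the moments of the distribution `ν_t` of the boolean unitary Brownian motion. -/
theorem stmt_18 (t : ℝ) (ht : 0 < t) :
    DifferentiableOn ℂ
      (fun z : ℂ => z * Complex.exp ((t : ℂ) * (z + 1) / (2 * (z - 1))) /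
        (1 - z * Complex.exp ((t : ℂ) * (z + 1) / (2 * (z - 1)))))
      (Metric.ball (0 : ℂ) 1) ∧
    ∀ z : ℂ, ‖z‖ < 1 →
      HasSum (fun n : ℕ => ((booleanMoment t (n + 1) : ℝ) : ℂ) * z ^ (n + 1))
        (z * Complex.exp ((t : ℂ) * (z + 1) / (2 * (z - 1))) /
          (1 - z * Complex.exp ((t : ℂ) * (z + 1) / (2 * (z - 1))))) := by
  refine ⟨differentiableOn_theta_div_one_sub ht.le, fun z hz => ?_⟩
  have h := hasSum_of_eventually_hasSum_of_differentiableOn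
    (differentiableOn_theta_div_one_sub ht.le) (eventually_hasSum_booleanMoment ht.le)
    (mem_ball_zero_iff.2 hz)
  have h0 : booleanMoment t 0 = 0 := by simp [booleanMoment]
  have h' := (hasSum_nat_add_iff' 1).2 h
  rw [sum_range_one, h0, Complex.ofReal_zero, zero_mul, sub_zero] at h'
  exact h'
end
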